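/- arXiv:1404.4829 — 2 statements merged into one kernel-verified Lean document; each statement's English description precedes it below -/
import Mathlib

section
/- Let h > 0, T ≥ 0, and let F : ℝ≥0 → ℝ be continuous with F(0) ∈ [0,h]. If the one-sided downward reflection Γʰ(F)(t) := F(t) − max(sup_{[0,t]} F − h, 0) satisfies Γʰ(F)(t) ≥ 0 for all t ∈ [0,T], then the two-sided Skorohod reflection satisfies Λ_{0,h}(F)(t) = Γʰ(F)(t) for all t ∈ [0,T]. -/
open Set
open scoped NNReal ENNReal

/-- Solution data for the two-sided Skorohod reflection problem of `f` on `[0,h]`: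
`c0` and `ch` are the compensators at `0` and at `h`,
and `fun t => f t + ch t + c0 t` is the reflected path `Λ_{0,h}(f)`.
The support conditions on the measures `dc⁰` and `d(−cʰ)` are phrased as:
the compensator is constant on every (closed) interval on which the reflected
path avoids the corresponding boundary. -/
structure SkorohodPair (h : ℝ) (f c0 ch : ℝ≥0 → ℝ) : Prop where
  cont0 : Continuous c0
  conth : Continuous ch
  init0 : c0 0 = 0
  inith : ch 0 = 0
  mem_Icc : ∀ t, f t + ch t + c0 t ∈ Set.Icc (0 : ℝ) h
  mono0 : Monotone c0
  antih : Antitone ch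
  flat0 : ∀ a b : ℝ≥0, a ≤ b → (∀ t ∈ Set.Icc a b, f t + ch t + c0 t ≠ 0) → c0 b = c0 a
  flath : ∀ a b : ℝ≥0, a ≤ b → (∀ t ∈ Set.Icc a b, f t + ch t + c0 t ≠ h) → ch b = ch a

/-- The one-sided Skorohod reflection of `F` below level `h` (downward push at `h`):
`Γʰ(F)(t) = F t − max (sup_{[0,t]} F − h) 0`. -/
noncomputable def gammaDown (h : ℝ) (F : ℝ≥0 → ℝ) (t : ℝ≥0) : ℝ :=
  F t - max (sSup (F '' Set.Icc 0 t) - h) 0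

/-! The gap `F + cʰ + c⁰ - Γʰ(F) = cʰ + c⁰ + (sup F - h)⁺` is continuous and vanishes at time `0`.
Where it is negative, the two-sided path lies below `Γʰ(F) ≤ h`, so `cʰ` is frozen while `c⁰` and
`(sup F - h)⁺` grow: the gap can only increase. Where it is positive, `0 ≤ Γʰ(F) <` path `≤ h`,
so the path avoids `0` and `Γʰ(F)` avoids `h`: `c⁰` and `(sup F - h)⁺` are frozen while `cʰ`
decreases, and the gap can only decrease. A last-exit argument then keeps the gap at `0`. -/

section LastExit

variable {α : Type*} [ConditionallyCompleteLinearOrder α] [TopologicalSpace α] [OrderTopology α]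
  [DenselyOrdered α]

/-- Starting from the last time `s` before `t` at which `D ≤ 0`, the function is positive on
`(s, t]`, hence `D t ≤ D u` for all `u ∈ (s, t]`, and letting `u ↓ s` gives `D t ≤ D s ≤ 0`. -/
theorem le_zero_of_decreasing_while_pos {D : α → ℝ} {a t : α} (hat : a ≤ t)
    (hD : ContinuousOn D (Icc a t)) (ha : D a ≤ 0)
    (hdec : ∀ u ∈ Ioc a t, (∀ v ∈ Icc u t, 0 < D v) → D t ≤ D u) : D t ≤ 0 := by
  by_contra! ht
  set A := Icc a t ∩ D ⁻¹' Iic 0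
  have hA : IsClosed A := hD.preimage_isClosed_of_isClosed isClosed_Icc isClosed_Iic
  have haA : a ∈ A := ⟨⟨le_rfl, hat⟩, ha⟩
  have hAbdd : BddAbove A := ⟨t, fun u hu => hu.1.2⟩
  set s := sSup A
  have hsA : s ∈ A := hA.csSup_mem ⟨a, haA⟩ hAbdd
  have has : a ≤ s := le_csSup hAbdd haA
  have hst : s < t := lt_of_le_of_ne hsA.1.2 fun hst => (hst ▸ hsA.2 : D t ≤ 0).not_gt ht
  have hpos : ∀ v ∈ Ioc s t, 0 < D v := fun v hv => by
    by_contra! hv0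
    exact (le_csSup hAbdd ⟨⟨has.trans hv.1.le, hv.2⟩, hv0⟩).not_gt hv.1
  have hlim : Filter.Tendsto D (nhdsWithin s (Ioc s t)) (nhds (D s)) :=
    (hD s hsA.1).mono (Ioc_subset_Icc_self.trans (Icc_subset_Icc_left has))
  have := left_nhdsWithin_Ioc_neBot hst
  have hts : D t ≤ D s := ge_of_tendsto hlim <| eventually_nhdsWithin_of_forall fun u hu =>
    hdec u ⟨has.trans_lt hu.1, hu.2⟩ fun v hv => hpos v ⟨hu.1.trans_le hv.1, hv.2⟩
  exact (hts.trans hsA.2).not_gt ht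

end LastExit

section RunningSup

variable {F : ℝ≥0 → ℝ}

noncomputable def runningSup (F : ℝ≥0 → ℝ) (t : ℝ≥0) : ℝ := sSup (F '' Icc 0 t)

theorem le_runningSup (hF : Continuous F) {u t : ℝ≥0} (hut : u ≤ t) : F u ≤ runningSup F t :=
  le_csSup (isCompact_Icc.bddAbove_image hF.continuousOn) (mem_image_of_mem F ⟨zero_le, hut⟩)

theorem runningSup_mono (hF : Continuous F) : Monotone (runningSup F) := fun _ _ hab =>
  csSup_le_csSup (isCompact_Icc.bddAbove_image hF.continuousOn) ⟨F 0, mem_image_of_mem F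
    ⟨le_rfl, zero_le⟩⟩ (image_mono (Icc_subset_Icc le_rfl hab))

theorem runningSup_zero : runningSup F 0 = F 0 := by
  rw [runningSup, Icc_self, image_singleton, csSup_singleton]

/-- Rescaling `[0,t]` to `[0,1]` makes the running supremum a supremum over a fixed compact set. -/
theorem continuous_runningSup (hF : Continuous F) : Continuous (runningSup F) := by
  have h := isCompact_Icc (a := (0 : ℝ≥0)) (b := 1) |>.continuous_sSup
    (f := fun t s => F (s * t)) (hF.comp (continuous_snd.mul continuous_fst))
  refine h.congr fun t => ?_
  have hscale : (· * t) '' Icc 0 1 = Icc 0 t := by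
    simpa using image_mul_right_Icc (zero_le_one (α := ℝ≥0)) zero_le
  rw [runningSup, ← hscale, image_image]

theorem exists_eq_runningSup_of_lt (hF : Continuous F) {a b : ℝ≥0}
    (hab : runningSup F a < runningSup F b) :
    ∃ x ∈ Icc a b, F x = runningSup F x ∧ runningSup F x = runningSup F b := by
  obtain ⟨x, hx, hFx⟩ := isCompact_Icc.exists_sSup_image_eq
    (nonempty_Icc.2 zero_le) hF.continuousOn
  have hxb : runningSup F x = runningSup F b :=
    le_antisymm (runningSup_mono hF hx.2) (hFx.le.trans (le_runningSup hF le_rfl))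
  refine ⟨x, ⟨le_of_not_ge fun hxa => ?_, hx.2⟩, hFx.symm.trans hxb.symm, hxb⟩
  exact (le_runningSup hF hxa).not_gt (hab.trans_eq hFx)

end RunningSup

section OneSided

variable {h : ℝ} {F : ℝ≥0 → ℝ}

noncomputable def downPush (h : ℝ) (F : ℝ≥0 → ℝ) (t : ℝ≥0) : ℝ := max (runningSup F t - h) 0

theorem gammaDown_eq_sub_downPush (t : ℝ≥0) : gammaDown h F t = F t - downPush h F t := rfl

theorem monotone_downPush (hF : Continuous F) : Monotone (downPush h F) := fun _ _ hab =>
  max_le_max_right 0 (sub_le_sub_right (runningSup_mono hF hab) h)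

theorem continuous_gammaDown (hF : Continuous F) : Continuous (gammaDown h F) :=
  hF.sub (((continuous_runningSup hF).sub continuous_const).max continuous_const)

theorem gammaDown_zero (hF0 : F 0 ≤ h) : gammaDown h F 0 = F 0 := by
  rw [gammaDown_eq_sub_downPush, downPush, runningSup_zero, max_eq_right (sub_nonpos.2 hF0),
    sub_zero]

theorem gammaDown_le (hF : Continuous F) (t : ℝ≥0) : gammaDown h F t ≤ h := by
  have : F t - h ≤ downPush h F t := (sub_le_sub_right (le_runningSup hF le_rfl) h).trans
    (le_max_left _ _)
  rw [gammaDown_eq_sub_downPush]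
  linarith

theorem downPush_eq_of_forall_ne (hF : Continuous F) {a b : ℝ≥0} (hab : a ≤ b)
    (hne : ∀ u ∈ Icc a b, gammaDown h F u ≠ h) : downPush h F b = downPush h F a := by
  refine le_antisymm (le_of_not_gt fun hlt => ?_) (monotone_downPush hF hab)
  have hpush : downPush h F b = runningSup F b - h :=
    max_eq_left (le_of_not_gt fun hneg =>
      hlt.not_ge ((max_eq_right hneg.le).trans_le (le_max_right _ _)))
  have hsup : runningSup F a < runningSup F b := lt_of_not_ge fun hba =>
    hlt.not_ge (hpush ▸ (sub_le_sub_right hba h).trans (le_max_left _ _))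
  obtain ⟨x, hx, hFx, hxb⟩ := exists_eq_runningSup_of_lt hF hsup
  refine hne x hx ?_
  rw [gammaDown_eq_sub_downPush, downPush, hFx, hxb]
  change _ - downPush h F b = h
  rw [hpush]
  ring

end OneSided

namespace SkorohodPair

variable {h : ℝ} {F c0 ch : ℝ≥0 → ℝ}

theorem continuous_path (hp : SkorohodPair h F c0 ch) (hF : Continuous F) :
    Continuous fun t => F t + ch t + c0 t :=
  (hF.add hp.conth).add hp.cont0

theorem gammaDown_le (hp : SkorohodPair h F c0 ch) (hF : Continuous F) (hF0 : F 0 ≤ h)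
    (t : ℝ≥0) : gammaDown h F t ≤ F t + ch t + c0 t := by
  suffices (gammaDown h F - fun u => F u + ch u + c0 u) t ≤ 0 from sub_nonpos.1 this
  refine le_zero_of_decreasing_while_pos zero_le
    ((continuous_gammaDown hF).sub (hp.continuous_path hF)).continuousOn
    (by simp [gammaDown_zero hF0, hp.init0, hp.inith]) fun u hu hgap => ?_
  simp only [Pi.sub_apply, sub_pos] at hgap
  have hch : ch t = ch u := hp.flath u t hu.2 fun v hv hvh => by
    linarith [hgap v hv, _root_.gammaDown_le (h := h) hF v]
  have hc0 := hp.mono0 hu.2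
  have hpush := monotone_downPush (h := h) hF hu.2
  simp only [Pi.sub_apply, gammaDown_eq_sub_downPush] at hpush ⊢
  linarith

theorem le_gammaDown (hp : SkorohodPair h F c0 ch) (hF : Continuous F) (hF0 : F 0 ≤ h)
    {t : ℝ≥0} (hpos : ∀ u ≤ t, 0 ≤ gammaDown h F u) :
    F t + ch t + c0 t ≤ gammaDown h F t := by
  suffices ((fun u => F u + ch u + c0 u) - gammaDown h F) t ≤ 0 from sub_nonpos.1 this
  refine le_zero_of_decreasing_while_pos zero_le
    ((hp.continuous_path hF).sub (continuous_gammaDown hF)).continuousOn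
    (by simp [gammaDown_zero hF0, hp.init0, hp.inith]) fun u hu hgap => ?_
  simp only [Pi.sub_apply, sub_pos] at hgap
  have hc0 : c0 t = c0 u := hp.flat0 u t hu.2 fun v hv hv0 => by
    linarith [hgap v hv, hpos v hv.2]
  have hpush : downPush h F t = downPush h F u :=
    downPush_eq_of_forall_ne hF hu.2 fun v hv hvh => by linarith [hgap v hv, (hp.mem_Icc v).2]
  have hch := hp.antih hu.2
  simp only [Pi.sub_apply, gammaDown_eq_sub_downPush] at hpush ⊢
  linarith

end SkorohodPair

theorem two_sided_eq_one_sided_down_general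
    (h : ℝ) (T : ℝ≥0) (F : ℝ≥0 → ℝ) (hF : Continuous F)
    (hF0 : F 0 ∈ Set.Icc (0 : ℝ) h)
    (c0 ch : ℝ≥0 → ℝ) (hp : SkorohodPair h F c0 ch)
    (hpos : ∀ t ≤ T, 0 ≤ gammaDown h F t) :
    ∀ t ≤ T, F t + ch t + c0 t = gammaDown h F t := fun t ht =>
  le_antisymm (hp.le_gammaDown hF hF0.2 fun u hu => hpos u (hu.trans ht))
    (hp.gammaDown_le hF hF0.2 t)

/-- If the one-sided downward reflection `Γʰ(F)` stays non-negative on `[0,T]`, then it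
coincides with the two-sided Skorohod reflection `Λ_{0,h}(F)` on `[0,T]`. -/
theorem two_sided_eq_one_sided_down
    (h : ℝ) (hh : 0 < h) (T : ℝ≥0) (F : ℝ≥0 → ℝ) (hF : Continuous F)
    (hF0 : F 0 ∈ Set.Icc (0 : ℝ) h)
    (c0 ch : ℝ≥0 → ℝ) (hp : SkorohodPair h F c0 ch)
    (hpos : ∀ t ≤ T, 0 ≤ gammaDown h F t) :
    ∀ t ≤ T, F t + ch t + c0 t = gammaDown h F t :=
  two_sided_eq_one_sided_down_general h T F hF hF0 c0 ch hp hpos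
end

section
/- Let h > 0 and f : ℝ≥0 → ℝ continuous with f(0) = 0, and suppose t_n < ∞ (the n-th returning time of Λ_{0,h}(f) to 0). Then the total variation of the h-cut f_h on [0, t_n] equals Σ_{k=1}^{n} (f_h(t_{k−1}) − f_h(s_k)) + (f_h(t_k) − f_h(s_k)), each summand being non-negative; equivalently TV(f_h, [0,t_n]) = Σ_k (Y_k + X_k) where X_k = f_h(t_k) − f_h(s_k) and Y_k = f_h(t_{k−1}) − f_h(s_k). -/
open Set
open scoped NNReal ENNReal

/-- `eInf S` : infimum of a set of times, in `ℝ≥0∞`, with the convention `inf ∅ = ∞`. -/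
noncomputable def eInf (S : Set ℝ≥0) : ℝ≥0∞ := sInf ((fun x : ℝ≥0 => (x : ℝ≥0∞)) '' S)

/-- `eSup S` : supremum of a set of times, in `ℝ≥0∞`. -/
noncomputable def eSup (S : Set ℝ≥0) : ℝ≥0∞ := sSup ((fun x : ℝ≥0 => (x : ℝ≥0∞)) '' S)

/-- `inf_{[a,s]} f`, where the left endpoint `a` may be infinite. -/
noncomputable def infBetween (f : ℝ≥0 → ℝ) (a : ℝ≥0∞) (s : ℝ≥0) : ℝ :=
  sInf (f '' {u : ℝ≥0 | a ≤ (u : ℝ≥0∞) ∧ u ≤ s})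

/-- `sup_{[a,s]} f`, where the left endpoint `a` may be infinite. -/
noncomputable def supBetween (f : ℝ≥0 → ℝ) (a : ℝ≥0∞) (s : ℝ≥0) : ℝ :=
  sSup (f '' {u : ℝ≥0 | a ≤ (u : ℝ≥0∞) ∧ u ≤ s})

/-- `θ_{n+1} = inf {s > τ_n : f s − h = inf_{[τ_n,s]} f}`. -/
noncomputable def thetaNext (h : ℝ) (f : ℝ≥0 → ℝ) (τ : ℝ≥0∞) : ℝ≥0∞ :=
  eInf {s : ℝ≥0 | τ < (s : ℝ≥0∞) ∧ f s - h = infBetween f τ s}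

/-- `τ_{n+1} = inf {s > θ_{n+1} : sup_{[θ_{n+1},s]} f = f s + h}`. -/
noncomputable def tauNext (h : ℝ) (f : ℝ≥0 → ℝ) (τ : ℝ≥0∞) : ℝ≥0∞ :=
  eInf {s : ℝ≥0 | thetaNext h f τ < (s : ℝ≥0∞) ∧
    supBetween f (thetaNext h f τ) s = f s + h}

/-- The sequence `(τ_n)` of completion times of the sub-excursions of height `h`. -/
noncomputable def tauSeq (h : ℝ) (f : ℝ≥0 → ℝ) : ℕ → ℝ≥0∞
  | 0 => 0
  | n + 1 => tauNext h f (tauSeq h f n)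

/-- `σ_{n+1} = sup {s ∈ [τ_n, τ_{n+1}] : f s = inf_{[τ_n,s]} f}` (and `σ₀ = 0`). -/
noncomputable def sigmaSeq (h : ℝ) (f : ℝ≥0 → ℝ) : ℕ → ℝ≥0∞
  | 0 => 0
  | n + 1 => eSup {s : ℝ≥0 | tauSeq h f n ≤ (s : ℝ≥0∞) ∧ (s : ℝ≥0∞) ≤ tauSeq h f (n + 1) ∧
      f s = infBetween f (tauSeq h f n) s}

/-- The returning times of a path `Λ` to level `0` after visiting level `h`:
`t₀ = 0`, `T_{n+1} = inf {u > t_n : Λ u = h}`, `t_{n+1} = inf {u > T_{n+1} : Λ u = 0}`. -/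
noncomputable def retSeq (h : ℝ) (Λ : ℝ≥0 → ℝ) : ℕ → ℝ≥0∞
  | 0 => 0
  | n + 1 =>
      eInf {u : ℝ≥0 |
        eInf {v : ℝ≥0 | retSeq h Λ n < (v : ℝ≥0∞) ∧ Λ v = h} < (u : ℝ≥0∞) ∧ Λ u = 0}

/-- The exit times of `Λ` at level `0`: `s_{n+1} = sup {u ∈ [t_n, t_{n+1}) : Λ u = 0}`. -/
noncomputable def exitSeq (h : ℝ) (Λ : ℝ≥0 → ℝ) : ℕ → ℝ≥0∞
  | 0 => 0
  | n + 1 => eSup {u : ℝ≥0 | retSeq h Λ n ≤ (u : ℝ≥0∞) ∧ (u : ℝ≥0∞) < retSeq h Λ (n + 1) ∧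
      Λ u = 0}

/-!
Write `Λ = f + cʰ + c⁰`, so that the `h`-cut is `f - Λ = -(cʰ + c⁰)`. After `t_{k-1}` the path `Λ`
first reaches `h` at `T_k`, and its last zero before `t_k` is `s_k < T_k`. Hence `Λ ≠ h` on
`[t_{k-1}, s_k]`, where `cʰ` is frozen and `f - Λ` decreases with `c⁰`; and `Λ ≠ 0` on
`(s_k, t_k)`, where `c⁰` is frozen and `f - Λ` increases with `-cʰ`. The variation of a function
that is monotone on each piece of a subdivision is the sum of the absolute increments.
-/

section Variation

variable {α : Type*} [LinearOrder α]

lemma eVariationOn_neg (g : α → ℝ) (s : Set α) :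
    eVariationOn (fun x => -g x) s = eVariationOn g s := by
  simp only [eVariationOn, edist_neg_neg]

lemma MonotoneOn.eVariationOn_Icc_eq {g : α → ℝ} {a b : α} (hab : a ≤ b)
    (hg : MonotoneOn g (Icc a b)) : eVariationOn g (Icc a b) = ENNReal.ofReal (g b - g a) := by
  simpa using hg.eVariationOn_eq (left_mem_Icc.2 hab) (right_mem_Icc.2 hab)

lemma AntitoneOn.eVariationOn_Icc_eq {g : α → ℝ} {a b : α} (hab : a ≤ b)
    (hg : AntitoneOn g (Icc a b)) : eVariationOn g (Icc a b) = ENNReal.ofReal (g a - g b) := by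
  rw [← eVariationOn_neg, hg.neg.eVariationOn_Icc_eq hab, neg_sub_neg]

lemma eVariationOn_Icc_add_Icc {E : Type*} [PseudoEMetricSpace E] (g : α → E) {a b c : α}
    (hab : a ≤ b) (hbc : b ≤ c) :
    eVariationOn g (Icc a b) + eVariationOn g (Icc b c) = eVariationOn g (Icc a c) := by
  simpa [inter_eq_self_of_subset_right, Icc_subset_Icc, hab, hbc] using
    eVariationOn.Icc_add_Icc g (s := Icc a c) hab hbc ⟨hab, hbc⟩

lemma eVariationOn_Icc_eq_sum_of_antitoneOn_monotoneOn {g : α → ℝ} {t s : ℕ → α} {n : ℕ}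
    (hts : ∀ k < n, t k ≤ s (k + 1)) (hst : ∀ k < n, s (k + 1) ≤ t (k + 1))
    (hanti : ∀ k < n, AntitoneOn g (Icc (t k) (s (k + 1))))
    (hmono : ∀ k < n, MonotoneOn g (Icc (s (k + 1)) (t (k + 1)))) :
    eVariationOn g (Icc (t 0) (t n)) = ENNReal.ofReal (∑ k ∈ Finset.range n,
      ((g (t k) - g (s (k + 1))) + (g (t (k + 1)) - g (s (k + 1))))) := by
  have hY : ∀ k < n, 0 ≤ g (t k) - g (s (k + 1)) := fun k hk =>
    sub_nonneg.2 (hanti k hk (left_mem_Icc.2 (hts k hk)) (right_mem_Icc.2 (hts k hk)) (hts k hk))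
  have hX : ∀ k < n, 0 ≤ g (t (k + 1)) - g (s (k + 1)) := fun k hk =>
    sub_nonneg.2 (hmono k hk (left_mem_Icc.2 (hst k hk)) (right_mem_Icc.2 (hst k hk)) (hst k hk))
  suffices key : ∀ m ≤ n, t 0 ≤ t m ∧ eVariationOn g (Icc (t 0) (t m)) = ENNReal.ofReal
      (∑ k ∈ Finset.range m, ((g (t k) - g (s (k + 1))) + (g (t (k + 1)) - g (s (k + 1))))) from
    (key n le_rfl).2
  intro m hm
  induction m with
  | zero => simp
  | succ m ih =>
    obtain ⟨h0m, hvar⟩ := ih (Nat.le_of_succ_le hm)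
    have hmn : m < n := hm
    have hsum : 0 ≤ ∑ k ∈ Finset.range m,
        ((g (t k) - g (s (k + 1))) + (g (t (k + 1)) - g (s (k + 1)))) :=
      Finset.sum_nonneg fun k hk => have hkn := (Finset.mem_range.1 hk).trans hmn
        add_nonneg (hY k hkn) (hX k hkn)
    have hm1 : t m ≤ t (m + 1) := (hts m hmn).trans (hst m hmn)
    refine ⟨h0m.trans hm1, ?_⟩
    rw [← eVariationOn_Icc_add_Icc g h0m hm1, ← eVariationOn_Icc_add_Icc g (hts m hmn) (hst m hmn),
      hvar, (hanti m hmn).eVariationOn_Icc_eq (hts m hmn),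
      (hmono m hmn).eVariationOn_Icc_eq (hst m hmn), Finset.sum_range_succ,
      ENNReal.ofReal_add hsum (add_nonneg (hY m hmn) (hX m hmn)),
      ENNReal.ofReal_add (hY m hmn) (hX m hmn)]

end Variation

section Extrema

variable {S C : Set ℝ≥0} {t : ℝ≥0}

lemma eInf_le_coe {u : ℝ≥0} (hu : u ∈ S) : eInf S ≤ u := sInf_le ⟨u, hu, rfl⟩

lemma le_eInf {c : ℝ≥0∞} (h : ∀ u ∈ S, c ≤ u) : c ≤ eInf S :=
  le_sInf (by rintro _ ⟨u, hu, rfl⟩; exact h u hu)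

lemma coe_le_eSup {u : ℝ≥0} (hu : u ∈ S) : (u : ℝ≥0∞) ≤ eSup S := le_sSup ⟨u, hu, rfl⟩

lemma eSup_le {c : ℝ≥0∞} (h : ∀ u ∈ S, (u : ℝ≥0∞) ≤ c) : eSup S ≤ c :=
  sSup_le (by rintro _ ⟨u, hu, rfl⟩; exact h u hu)

lemma isGLB_of_eInf_eq_coe (h : eInf S = t) : IsGLB S t := by
  refine ⟨fun u hu => ?_, fun c hc => ?_⟩
  · simpa [h] using eInf_le_coe hu
  · have := le_eInf (c := c) fun u hu => by exact_mod_cast hc hu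
    rwa [h, ENNReal.coe_le_coe] at this

lemma isLUB_of_eSup_eq_coe (h : eSup S = t) : IsLUB S t := by
  refine ⟨fun u hu => ?_, fun c hc => ?_⟩
  · simpa [h] using coe_le_eSup hu
  · have := eSup_le (c := c) fun u hu => by exact_mod_cast hc hu
    rwa [h, ENNReal.coe_le_coe] at this

lemma IsClosed.mem_of_eInf_eq_coe (hC : IsClosed C) (hSC : S ⊆ C) (h : eInf S = t) : t ∈ C := by
  have hS : S.Nonempty := by
    by_contra hS
    rw [not_nonempty_iff_eq_empty] at hS
    simp [eInf, hS] at h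
  exact closure_minimal hSC hC ((isGLB_of_eInf_eq_coe h).mem_closure hS)

end Extrema

namespace SkorohodPair

variable {h : ℝ} {f c0 ch : ℝ≥0 → ℝ}

lemma continuous_reflected (hp : SkorohodPair h f c0 ch) (hf : Continuous f) :
    Continuous fun t => f t + ch t + c0 t :=
  (hf.add hp.conth).add hp.cont0

lemma c0_eq_of_ne_zero_on_Ioo (hp : SkorohodPair h f c0 ch) {a b : ℝ≥0} (hab : a ≤ b)
    (hne : ∀ t ∈ Ioo a b, f t + ch t + c0 t ≠ 0) : ∀ u ∈ Icc a b, c0 u = c0 a := by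
  rcases hab.eq_or_lt with rfl | hab
  · simp
  obtain ⟨m, ham, hmb⟩ := exists_between hab
  have hIoo : EqOn c0 (fun _ => c0 m) (Ioo a b) := by
    intro u hu
    rcases le_total u m with hum | hmu
    · exact (hp.flat0 u m hum fun v hv => hne v ⟨hu.1.trans_le hv.1, hv.2.trans_lt hmb⟩).symm
    · exact hp.flat0 m u hmu fun v hv => hne v ⟨ham.trans_le hv.1, hv.2.trans_lt hu.2⟩
  have hIcc := closure_Ioo hab.ne ▸ hIoo.closure hp.cont0 continuous_const
  intro u hu
  rw [hIcc hu, hIcc (left_mem_Icc.2 hab.le)]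

lemma antitoneOn_sub_reflected (hp : SkorohodPair h f c0 ch) {a b : ℝ≥0}
    (hne : ∀ t ∈ Icc a b, f t + ch t + c0 t ≠ h) :
    AntitoneOn (fun t => f t - (f t + ch t + c0 t)) (Icc a b) := by
  intro x hx y hy hxy
  have hchx := hp.flath a x hx.1 fun v hv => hne v ⟨hv.1, hv.2.trans hx.2⟩
  have hchy := hp.flath a y hy.1 fun v hv => hne v ⟨hv.1, hv.2.trans hy.2⟩
  have hc0 := hp.mono0 hxy
  dsimp only
  linarith

lemma monotoneOn_sub_reflected (hp : SkorohodPair h f c0 ch) {a b : ℝ≥0} (hab : a ≤ b)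
    (hne : ∀ t ∈ Ioo a b, f t + ch t + c0 t ≠ 0) :
    MonotoneOn (fun t => f t - (f t + ch t + c0 t)) (Icc a b) := by
  intro x hx y hy hxy
  have hc0x := hp.c0_eq_of_ne_zero_on_Ioo hab hne x hx
  have hc0y := hp.c0_eq_of_ne_zero_on_Ioo hab hne y hy
  have hch := hp.antih hxy
  dsimp only
  linarith

end SkorohodPair

section ReturningTimes

variable {h : ℝ} {Λ : ℝ≥0 → ℝ}

lemma apply_eq_zero_of_retSeq_eq (hΛ : Continuous Λ) (hΛ0 : Λ 0 = 0) {k : ℕ} {a : ℝ≥0}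
    (ha : retSeq h Λ k = a) : Λ a = 0 := by
  cases k with
  | zero =>
    obtain rfl : a = 0 := by simpa [retSeq] using ha.symm
    exact hΛ0
  | succ k => exact (isClosed_eq hΛ continuous_const).mem_of_eInf_eq_coe (fun u hu => hu.2) ha

lemma exists_hitting_time_between_retSeq (hΛ : Continuous Λ) (hh : h ≠ 0) {k : ℕ} {a b : ℝ≥0}
    (ha : retSeq h Λ k = a) (hb : retSeq h Λ (k + 1) = b) (hΛa : Λ a = 0) :
    ∃ T, a < T ∧ T < b ∧ Λ T = h ∧ (∀ u ∈ Ioo a T, Λ u ≠ h) ∧ ∀ u ∈ Ioo T b, Λ u ≠ 0 := by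
  rw [retSeq, ha] at hb
  set T' := eInf {v : ℝ≥0 | (a : ℝ≥0∞) < v ∧ Λ v = h} with hT'
  have hT'b : T' ≤ b := hb ▸ le_eInf fun u hu => hu.1.le
  lift T' to ℝ≥0 using ne_top_of_le_ne_top ENNReal.coe_ne_top hT'b with T
  have hTglb := isGLB_of_eInf_eq_coe hT'.symm
  have hbglb := isGLB_of_eInf_eq_coe hb
  have hΛT : Λ T = h :=
    (isClosed_eq hΛ continuous_const).mem_of_eInf_eq_coe (fun v hv => hv.2) hT'.symm
  have hΛb : Λ b = 0 :=
    (isClosed_eq hΛ continuous_const).mem_of_eInf_eq_coe (fun v hv => hv.2) hb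
  have haT : a < T := by
    refine (hTglb.2 fun v hv => ?_).lt_of_ne ?_
    · exact (by exact_mod_cast hv.1 : a < v).le
    · rintro rfl
      exact hh (hΛT ▸ hΛa)
  have hTb : T < b := by
    refine (by exact_mod_cast hT'b : T ≤ b).lt_of_ne ?_
    rintro rfl
    exact hh (hΛb ▸ hΛT).symm
  refine ⟨T, haT, hTb, hΛT, fun u hu hΛu => ?_, fun u hu hΛu => ?_⟩
  · exact (hTglb.1 ⟨by exact_mod_cast hu.1, hΛu⟩).not_gt hu.2
  · exact (hbglb.1 ⟨by exact_mod_cast hu.1, hΛu⟩).not_gt hu.2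

lemma exitSeq_succ_spec (hΛ : Continuous Λ) (hh : h ≠ 0) {k : ℕ} {a b σ : ℝ≥0}
    (ha : retSeq h Λ k = a) (hb : retSeq h Λ (k + 1) = b) (hσ : exitSeq h Λ (k + 1) = σ)
    (hΛa : Λ a = 0) :
    a ≤ σ ∧ σ ≤ b ∧ (∀ u ∈ Icc a σ, Λ u ≠ h) ∧ ∀ u ∈ Ioo σ b, Λ u ≠ 0 := by
  obtain ⟨T, haT, hTb, hΛT, hne_h, hne_0⟩ := exists_hitting_time_between_retSeq hΛ hh ha hb hΛa
  simp only [exitSeq, ha, hb, ENNReal.coe_le_coe, ENNReal.coe_lt_coe] at hσ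
  have hσlub := isLUB_of_eSup_eq_coe hσ
  have haσ : a ≤ σ := hσlub.1 ⟨le_rfl, haT.trans hTb, hΛa⟩
  have hσT : σ ≤ T :=
    hσlub.2 fun u hu => not_lt.1 fun hTu => hne_0 u ⟨hTu, hu.2.1⟩ hu.2.2
  have hΛσ : Λ σ = 0 := closure_minimal (fun u hu => hu.2.2) (isClosed_eq hΛ continuous_const)
    (hσlub.mem_closure ⟨a, le_rfl, haT.trans hTb, hΛa⟩)
  have hσT' : σ < T := hσT.lt_of_ne fun hσT => hh (hΛT ▸ hσT ▸ hΛσ)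
  refine ⟨haσ, hσT.trans hTb.le, fun u hu hΛu => ?_, fun u hu hΛu => ?_⟩
  · rcases hu.1.eq_or_lt with rfl | hau
    · exact hh (hΛu ▸ hΛa)
    · exact hne_h u ⟨hau, hu.2.trans_lt hσT'⟩ hΛu
  · exact (hσlub.1 ⟨haσ.trans hu.1.le, hu.2, hΛu⟩).not_gt hu.1

end ReturningTimes

theorem total_variation_of_h_cut_general
    (h : ℝ) (hh : 0 < h) (f c0 ch : ℝ≥0 → ℝ) (hf : Continuous f) (hf0 : f 0 = 0)
    (hp : SkorohodPair h f c0 ch)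
    (Λ : ℝ≥0 → ℝ) (hΛ : ∀ u, Λ u = f u + ch u + c0 u)
    (n : ℕ) (t s : ℕ → ℝ≥0)
    (ht : ∀ k ≤ n, ((t k : ℝ≥0∞)) = retSeq h Λ k)
    (hs : ∀ k, 1 ≤ k → k ≤ n → ((s k : ℝ≥0∞)) = exitSeq h Λ k) :
    eVariationOn (fun u => f u - Λ u) (Set.Icc 0 (t n)) =
      ENNReal.ofReal (∑ k ∈ Finset.range n,
        (((f (t k) - Λ (t k)) - (f (s (k + 1)) - Λ (s (k + 1)))) +
          ((f (t (k + 1)) - Λ (t (k + 1))) - (f (s (k + 1)) - Λ (s (k + 1)))))) ∧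
    ∀ k < n, 0 ≤ (f (t k) - Λ (t k)) - (f (s (k + 1)) - Λ (s (k + 1))) ∧
      0 ≤ (f (t (k + 1)) - Λ (t (k + 1))) - (f (s (k + 1)) - Λ (s (k + 1))) := by
  obtain rfl : Λ = fun u => f u + ch u + c0 u := funext hΛ
  have hΛc := hp.continuous_reflected hf
  have hΛ0 : f 0 + ch 0 + c0 0 = 0 := by simp [hf0, hp.inith, hp.init0]
  have hpiece : ∀ k < n, t k ≤ s (k + 1) ∧ s (k + 1) ≤ t (k + 1) ∧
      AntitoneOn (fun u => f u - (f u + ch u + c0 u)) (Icc (t k) (s (k + 1))) ∧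
      MonotoneOn (fun u => f u - (f u + ch u + c0 u)) (Icc (s (k + 1)) (t (k + 1))) := by
    intro k hk
    have htk := (ht k hk.le).symm
    obtain ⟨hts, hst, hne_h, hne_0⟩ := exitSeq_succ_spec hΛc hh.ne' htk (ht (k + 1) hk).symm
      (hs (k + 1) k.succ_pos hk).symm (apply_eq_zero_of_retSeq_eq hΛc hΛ0 htk)
    exact ⟨hts, hst, hp.antitoneOn_sub_reflected hne_h, hp.monotoneOn_sub_reflected hst hne_0⟩
  have ht0 : t 0 = 0 := by simpa [retSeq] using ht 0 n.zero_le
  refine ⟨ht0 ▸ eVariationOn_Icc_eq_sum_of_antitoneOn_monotoneOn (fun k hk => (hpiece k hk).1)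
    (fun k hk => (hpiece k hk).2.1) (fun k hk => (hpiece k hk).2.2.1)
    (fun k hk => (hpiece k hk).2.2.2), fun k hk => ?_⟩
  obtain ⟨hts, hst, hanti, hmono⟩ := hpiece k hk
  exact ⟨sub_nonneg.2 (hanti (left_mem_Icc.2 hts) (right_mem_Icc.2 hts) hts),
    sub_nonneg.2 (hmono (left_mem_Icc.2 hst) (right_mem_Icc.2 hst) hst)⟩

/-- **Total variation of the `h`-cut up to `t_n`**: if the `n`-th returning time `t_n` of
`Λ = Λ_{0,h}(f)` to `0` is finite (the times `t_k, s_k` being given as finite times whose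
coercions equal the returning/exit times), then
`TV(f_h, [0,t_n]) = Σ_{k=1}^n (Y_k + X_k)` with `X_k = f_h(t_k) − f_h(s_k)` and
`Y_k = f_h(t_{k−1}) − f_h(s_k)`, each summand being non-negative. -/
theorem total_variation_of_h_cut
    (h : ℝ) (hh : 0 < h) (f c0 ch : ℝ≥0 → ℝ) (hf : Continuous f) (hf0 : f 0 = 0)
    (hp : SkorohodPair h f c0 ch)
    (Λ : ℝ≥0 → ℝ) (hΛ : ∀ u, Λ u = f u + ch u + c0 u)
    (n : ℕ) (hn : 1 ≤ n) (t s : ℕ → ℝ≥0)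
    (ht : ∀ k ≤ n, ((t k : ℝ≥0∞)) = retSeq h Λ k)
    (hs : ∀ k, 1 ≤ k → k ≤ n → ((s k : ℝ≥0∞)) = exitSeq h Λ k) :
    eVariationOn (fun u => f u - Λ u) (Set.Icc 0 (t n)) =
      ENNReal.ofReal (∑ k ∈ Finset.range n,
        (((f (t k) - Λ (t k)) - (f (s (k + 1)) - Λ (s (k + 1)))) +
          ((f (t (k + 1)) - Λ (t (k + 1))) - (f (s (k + 1)) - Λ (s (k + 1)))))) ∧
    ∀ k < n, 0 ≤ (f (t k) - Λ (t k)) - (f (s (k + 1)) - Λ (s (k + 1))) ∧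
      0 ≤ (f (t (k + 1)) - Λ (t (k + 1))) - (f (s (k + 1)) - Λ (s (k + 1))) :=
  total_variation_of_h_cut_general h hh f c0 ch hf hf0 hp Λ hΛ n t s ht hs
end
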